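/- For f, g ∈ L¹(ℝᴺ), the convolution (f ⊗ g)(x) = √(∏ₖ bₖ/iᴺ) · e^{-i∑ₖ aₖxₖ²} · ((f·e^{i∑ₖ aₖxₖ²}) ⋆ (g·e^{i∑ₖ aₖxₖ²}))(x) belongs to L¹(ℝᴺ), and its L¹ norm satisfies ‖f ⊗ g‖₁ ≤ √((2π)ᴺ ∏ₖ bₖ) · ‖f‖₁ · ‖g‖₁. -/

import Mathlib

/-!
The chirp factors `exp (± i ∑ aₖ xₖ²)` have modulus one, so `|f ⊗ g| = √(∏ bₖ) · |F ⋆ G|`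
for the chirped functions `F`, `G`, which satisfy `|F| = |f|` and `|G| = |g|`. Young's
inequality for the L¹ norm, which the normalisation `(2π)^{-N/2}` of both `⋆` and `‖·‖₁`
leaves in the form `‖F ⋆ G‖₁ ≤ ‖F‖₁ ‖G‖₁`, then gives `‖f ⊗ g‖₁ ≤ √(∏ bₖ) ‖f‖₁ ‖g‖₁`;
the extra factor `(2π)^{N/2} ≥ 1` of the bound is slack.
-/

open MeasureTheory Real Filter Topology

noncomputable section

/-- normalized multidimensional convolution `(f ⋆ g)(x) = (2π)^{-N/2} ∫ f(τ) g(x-τ) dτ`. -/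
def nconv {N : ℕ} (f g : (Fin N → ℝ) → ℂ) (x : Fin N → ℝ) : ℂ :=
  Complex.ofReal ((2 * Real.pi) ^ (-(N : ℝ) / 2)) * ∫ τ, f τ * g (x - τ)

/-- the QPFT-adapted convolution of type 1. -/
def qconv {N : ℕ} (a b : Fin N → ℝ) (f g : (Fin N → ℝ) → ℂ) (x : Fin N → ℝ) : ℂ :=
  ((∏ k, (b k : ℂ)) / Complex.I ^ N) ^ ((1 : ℂ) / 2) *
    Complex.exp (-(Complex.I * Complex.ofReal (∑ k, a k * x k ^ 2))) *
    nconv (fun t => f t * Complex.exp (Complex.I * Complex.ofReal (∑ k, a k * t k ^ 2)))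
      (fun t => g t * Complex.exp (Complex.I * Complex.ofReal (∑ k, a k * t k ^ 2))) x

open Convolution

theorem Complex.norm_cpow_one_div_two (z : ℂ) : ‖z ^ ((1 : ℂ) / 2)‖ = √‖z‖ := by
  rcases eq_or_ne z 0 with rfl | hz
  · simp
  · rw [Complex.norm_cpow_of_ne_zero hz, Real.sqrt_eq_rpow]
    norm_num

section Young

variable {𝕜 G E E' F : Type*} [NontriviallyNormedField 𝕜]
  [NormedAddCommGroup E] [NormedAddCommGroup E'] [NormedAddCommGroup F]
  [NormedSpace 𝕜 E] [NormedSpace 𝕜 E'] [NormedSpace 𝕜 F] [NormedSpace ℝ F]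
  [AddGroup G] [MeasurableSpace G] [MeasurableAdd₂ G] [MeasurableNeg G]
  {μ : Measure G} [SFinite μ] [μ.IsAddRightInvariant] {f : G → E} {g : G → E'}

open ContinuousLinearMap

theorem norm_convolution_ae_le (L : E →L[𝕜] E' →L[𝕜] F) (hf : Integrable f μ)
    (hg : Integrable g μ) :
    ∀ᵐ x ∂μ, ‖(f ⋆[L, μ] g) x‖ ≤ ‖L‖ * ((fun t => ‖f t‖) ⋆[lsmul ℝ ℝ, μ] fun t => ‖g t‖) x := by
  filter_upwards [hf.norm.ae_convolution_exists (lsmul ℝ ℝ) hg.norm] with x hx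
  rw [convolution_def, convolution_lsmul, ← integral_const_mul]
  refine norm_integral_le_of_norm_le (hx.const_mul _) (ae_of_all _ fun t => ?_)
  simpa [mul_assoc] using L.le_opNorm₂ (f t) (g (x - t))

theorem integral_norm_convolution_le (L : E →L[𝕜] E' →L[𝕜] F) (hf : Integrable f μ)
    (hg : Integrable g μ) :
    ∫ x, ‖(f ⋆[L, μ] g) x‖ ∂μ ≤ ‖L‖ * ((∫ x, ‖f x‖ ∂μ) * ∫ x, ‖g x‖ ∂μ) :=
  calc ∫ x, ‖(f ⋆[L, μ] g) x‖ ∂μ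
      ≤ ∫ x, ‖L‖ * ((fun t => ‖f t‖) ⋆[lsmul ℝ ℝ, μ] fun t => ‖g t‖) x ∂μ :=
        integral_mono_of_nonneg (ae_of_all _ fun _ => norm_nonneg _)
          ((hf.norm.integrable_convolution _ hg.norm).const_mul _) (norm_convolution_ae_le L hf hg)
    _ = ‖L‖ * ((∫ x, ‖f x‖ ∂μ) * ∫ x, ‖g x‖ ∂μ) := by
        rw [integral_const_mul, integral_convolution _ hf.norm hg.norm]
        rfl

end Young

section Normalized

variable {N : ℕ} {F G : (Fin N → ℝ) → ℂ}

theorem nconv_eq_convolution (F G : (Fin N → ℝ) → ℂ) :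
    nconv F G = fun x =>
      ((2 * π) ^ (-(N : ℝ) / 2) : ℝ) * (F ⋆[ContinuousLinearMap.mul ℂ ℂ] G) x :=
  rfl

theorem MeasureTheory.Integrable.nconv (hF : Integrable F) (hG : Integrable G) :
    Integrable (nconv F G) := by
  rw [nconv_eq_convolution]
  exact (hF.integrable_convolution _ hG).const_mul _

theorem norm_nconv (F G : (Fin N → ℝ) → ℂ) (x : Fin N → ℝ) :
    ‖nconv F G x‖ = (2 * π) ^ (-(N : ℝ) / 2) * ‖(F ⋆[ContinuousLinearMap.mul ℂ ℂ] G) x‖ := by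
  rw [nconv_eq_convolution, norm_mul, Complex.norm_real, Real.norm_of_nonneg (by positivity)]

theorem integral_norm_nconv_le (hF : Integrable F) (hG : Integrable G) :
    (2 * π) ^ (-(N : ℝ) / 2) * ∫ x, ‖nconv F G x‖ ≤
      ((2 * π) ^ (-(N : ℝ) / 2) * ∫ x, ‖F x‖) * ((2 * π) ^ (-(N : ℝ) / 2) * ∫ x, ‖G x‖) := by
  have hconv := integral_norm_convolution_le (μ := volume) (ContinuousLinearMap.mul ℂ ℂ) hF hG
  simp_rw [norm_nconv, integral_const_mul]
  calc (2 * π) ^ (-(N : ℝ) / 2) * ((2 * π) ^ (-(N : ℝ) / 2) *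
          ∫ x, ‖(F ⋆[ContinuousLinearMap.mul ℂ ℂ] G) x‖)
      ≤ (2 * π) ^ (-(N : ℝ) / 2) * ((2 * π) ^ (-(N : ℝ) / 2) * ((∫ x, ‖F x‖) * ∫ x, ‖G x‖)) := by
        gcongr
        exact hconv.trans (mul_le_of_le_one_left (by positivity)
          (ContinuousLinearMap.opNorm_mul_le ℂ ℂ))
    _ = _ := by ring

end Normalized

section Chirp

variable {N : ℕ}

def chirp (a t : Fin N → ℝ) : ℂ :=
  Complex.exp (Complex.I * Complex.ofReal (∑ k, a k * t k ^ 2))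

theorem norm_chirp (a t : Fin N → ℝ) : ‖chirp a t‖ = 1 :=
  Complex.norm_exp_I_mul_ofReal _

theorem continuous_chirp (a : Fin N → ℝ) : Continuous (chirp a) := by
  unfold chirp
  fun_prop

theorem integral_norm_mul_chirp (a : Fin N → ℝ) (f : (Fin N → ℝ) → ℂ) :
    ∫ t, ‖f t * chirp a t‖ = ∫ t, ‖f t‖ := by
  simp only [norm_mul, norm_chirp, mul_one]

theorem MeasureTheory.Integrable.mul_chirp {f : (Fin N → ℝ) → ℂ} (hf : Integrable f)
    (a : Fin N → ℝ) : Integrable fun t => f t * chirp a t :=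
  hf.mul_bdd (continuous_chirp a).aestronglyMeasurable (ae_of_all _ fun t => (norm_chirp a t).le)

theorem qconv_eq (a b : Fin N → ℝ) (f g : (Fin N → ℝ) → ℂ) :
    qconv a b f g = fun x => ((∏ k, (b k : ℂ)) / Complex.I ^ N) ^ ((1 : ℂ) / 2) *
      chirp (-a) x * nconv (fun t => f t * chirp a t) (fun t => g t * chirp a t) x := by
  ext x
  simp only [qconv, chirp, Pi.neg_apply, neg_mul, Finset.sum_neg_distrib, Complex.ofReal_neg,
    mul_neg]

theorem norm_qconv (a b : Fin N → ℝ) (f g : (Fin N → ℝ) → ℂ) (x : Fin N → ℝ) :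
    ‖qconv a b f g x‖ =
      √|∏ k, b k| * ‖nconv (fun t => f t * chirp a t) (fun t => g t * chirp a t) x‖ := by
  rw [qconv_eq, norm_mul, norm_mul, Complex.norm_cpow_one_div_two, norm_chirp, mul_one,
    norm_div, norm_pow, Complex.norm_I, one_pow, div_one,
    ← Complex.ofReal_prod, Complex.norm_real, Real.norm_eq_abs]

theorem MeasureTheory.Integrable.qconv {f g : (Fin N → ℝ) → ℂ} (hf : Integrable f)
    (hg : Integrable g) (a b : Fin N → ℝ) : Integrable (qconv a b f g) := by
  have hconv := (hf.mul_chirp a).nconv (hg.mul_chirp a)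
  rw [qconv_eq]
  refine hconv.bdd_mul (c := ‖((∏ k, (b k : ℂ)) / Complex.I ^ N) ^ ((1 : ℂ) / 2)‖)
    (continuous_const.mul (continuous_chirp (-a))).aestronglyMeasurable
    (ae_of_all _ fun t => ?_)
  rw [norm_mul, norm_chirp, mul_one]

end Chirp

theorem qconv_mem_L1_and_norm_bound {N : ℕ} (a b : Fin N → ℝ) (hb : ∀ k, 0 < b k)
    (f g : (Fin N → ℝ) → ℂ) (hf : Integrable f) (hg : Integrable g) :
    Integrable (qconv a b f g) ∧
      (2 * Real.pi) ^ (-(N : ℝ) / 2) * (∫ x, ‖qconv a b f g x‖) ≤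
        Real.sqrt ((2 * Real.pi) ^ N * ∏ k, b k) *
          ((2 * Real.pi) ^ (-(N : ℝ) / 2) * ∫ x, ‖f x‖) *
          ((2 * Real.pi) ^ (-(N : ℝ) / 2) * ∫ x, ‖g x‖) := by
  refine ⟨hf.qconv hg a b, ?_⟩
  set c : ℝ := (2 * π) ^ (-(N : ℝ) / 2)
  have hprod : 0 ≤ ∏ k, b k := Finset.prod_nonneg fun k _ => (hb k).le
  have hslack : √(∏ k, b k) ≤ √((2 * π) ^ N * ∏ k, b k) :=
    Real.sqrt_le_sqrt (le_mul_of_one_le_left hprod (one_le_pow₀ (by linarith [two_le_pi])))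
  calc c * ∫ x, ‖qconv a b f g x‖
      = √(∏ k, b k) * (c * ∫ x, ‖nconv (fun t => f t * chirp a t)
          (fun t => g t * chirp a t) x‖) := by
        simp_rw [norm_qconv, abs_of_nonneg hprod, integral_const_mul]
        ring
    _ ≤ √(∏ k, b k) * ((c * ∫ x, ‖f x * chirp a x‖) * (c * ∫ x, ‖g x * chirp a x‖)) :=
        mul_le_mul_of_nonneg_left
          (integral_norm_nconv_le (hf.mul_chirp a) (hg.mul_chirp a)) (Real.sqrt_nonneg _)
    _ ≤ √((2 * π) ^ N * ∏ k, b k) * (c * ∫ x, ‖f x‖) * (c * ∫ x, ‖g x‖) := by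
        rw [integral_norm_mul_chirp, integral_norm_mul_chirp, ← mul_assoc]
        gcongr
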